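/- Left exact functors extend to left exact functors on 2-term complexes: let Φ be an additive left exact functor between abelian categories (e.g. of modules), and let Y : E → F be a butterfly with F⁻¹ injective. Then the diagonal 0 → F⁻¹ → Y → E⁰ → 0 is split exact, hence 0 → Φ(F⁻¹) → Φ(Y) → Φ(E⁰) → 0 is exact, and (Φ(Y), Φ(i), Φ(j), Φ(p), Φ(q)) is a butterfly from Φ(E) = [Φ E⁻¹ → Φ E⁰] to Φ(F). -/

import Mathlib

/-!
Injectivity of `F⁻¹` lets `𝟙` extend along `i` to a retraction `Y ⟶ F⁻¹`, so the diagonal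
`0 → F⁻¹ → Y → E⁰ → 0` splits. An additive functor carries a splitting to a splitting, hence
`Φ` of the diagonal is again short exact, and the butterfly identities are equalities of
composites, which every functor preserves.
-/

open CategoryTheory

universe u v

namespace CategoryTheory.ShortComplex

lemma ab_shortExact_iff (S : ShortComplex AddCommGrpCat.{u}) :
    S.ShortExact ↔
      Function.Injective S.f ∧ Function.Exact S.f S.g ∧ Function.Surjective S.g := by
  refine ⟨fun hS ↦ ⟨hS.ab_injective_f, S.ab_exact_iff_function_exact.mp hS.exact,
    hS.ab_surjective_g⟩, fun ⟨hf, hfg, hg⟩ ↦ ?_⟩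
  have := (AddCommGrpCat.mono_iff_injective S.f).mpr hf
  have := (AddCommGrpCat.epi_iff_surjective S.g).mpr hg
  exact ⟨S.ab_exact_iff_function_exact.mpr hfg⟩

end CategoryTheory.ShortComplex

lemma CategoryTheory.Functor.map_apply_map_apply_of_apply_apply
    (Φ : AddCommGrpCat.{u} ⥤ AddCommGrpCat.{v}) {A B C : AddCommGrpCat.{u}}
    {f : A ⟶ B} {g : B ⟶ C} {h : A ⟶ C} (hfg : ∀ x, g (f x) = h x) (y : Φ.obj A) :
    Φ.map g (Φ.map f y) = Φ.map h y := by
  have : f ≫ g = h := by ext; exact hfg _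
  rw [← this, Φ.map_comp, ConcreteCategory.comp_apply]

theorem left_exact_functor_of_butterfly_general
    (Φ : AddCommGrpCat.{0} ⥤ AddCommGrpCat.{0}) [Φ.Additive]
    (E1 E0 F1 F0 : AddCommGrpCat) (dE : E1 ⟶ E0) (dF : F1 ⟶ F0)
    (Y : AddCommGrpCat) (j : E1 ⟶ Y) (q : Y ⟶ E0) (i : F1 ⟶ Y) (p : Y ⟶ F0)
    (hinj : Function.Injective i) (hsurj : Function.Surjective q)
    (hex : Function.Exact i q)
    (hpj : ∀ e, p (j e) = 0) (hqj : ∀ e, q (j e) = dE e) (hpi : ∀ f, p (i f) = - dF f)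
    (hF1 : Injective F1) :
    (∃ s : E0 ⟶ Y, ∀ x, q (s x) = x) ∧
    Function.Injective (Φ.map i) ∧ Function.Surjective (Φ.map q) ∧
    Function.Exact (Φ.map i) (Φ.map q) ∧
    (∀ e, Φ.map p (Φ.map j e) = 0) ∧ (∀ e, Φ.map q (Φ.map j e) = Φ.map dE e) ∧
    (∀ f, Φ.map p (Φ.map i f) = - Φ.map dF f) := by
  let S := ShortComplex.mk i q (by ext x; exact hex.apply_apply_eq_zero x)
  have hS : S.ShortExact := S.ab_shortExact_iff.mpr ⟨hinj, hex, hsurj⟩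
  have : Injective S.X₁ := hF1
  let σ := hS.splittingOfInjective
  obtain ⟨hΦi, hΦiq, hΦq⟩ := (S.map Φ).ab_shortExact_iff.mp (σ.map Φ).shortExact
  refine ⟨⟨σ.s, fun x ↦ ConcreteCategory.congr_hom σ.s_g x⟩, hΦi, hΦq, hΦiq, ?_, ?_, ?_⟩
  · simpa using Φ.map_apply_map_apply_of_apply_apply (h := 0) hpj
  · exact Φ.map_apply_map_apply_of_apply_apply hqj
  · simpa using Φ.map_apply_map_apply_of_apply_apply (h := -dF) hpi

/-- a left exact additive functor `Φ` on abelian groups extends to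
butterflies with injective `F⁻¹`: the diagonal `0 → F⁻¹ → Y → E⁰ → 0` of such a
butterfly splits, hence its image under `Φ` is exact, and `Φ` of the butterfly data is
again a butterfly from `Φ(E)` to `Φ(F)`. -/
theorem left_exact_functor_of_butterfly
    (Φ : AddCommGrpCat.{0} ⥤ AddCommGrpCat.{0}) [Φ.Additive]
    (hΦ : ∀ (A B C : AddCommGrpCat) (f : A ⟶ B) (g : B ⟶ C),
      Function.Injective f → Function.Exact f g →
      Function.Injective (Φ.map f) ∧ Function.Exact (Φ.map f) (Φ.map g))
    (E1 E0 F1 F0 : AddCommGrpCat) (dE : E1 ⟶ E0) (dF : F1 ⟶ F0)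
    (Y : AddCommGrpCat) (j : E1 ⟶ Y) (q : Y ⟶ E0) (i : F1 ⟶ Y) (p : Y ⟶ F0)
    (hinj : Function.Injective i) (hsurj : Function.Surjective q)
    (hex : Function.Exact i q)
    (hpj : ∀ e, p (j e) = 0) (hqj : ∀ e, q (j e) = dE e) (hpi : ∀ f, p (i f) = - dF f)
    (hF1 : Injective F1) :
    (∃ s : E0 ⟶ Y, ∀ x, q (s x) = x) ∧
    Function.Injective (Φ.map i) ∧ Function.Surjective (Φ.map q) ∧
    Function.Exact (Φ.map i) (Φ.map q) ∧
    (∀ e, Φ.map p (Φ.map j e) = 0) ∧ (∀ e, Φ.map q (Φ.map j e) = Φ.map dE e) ∧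
    (∀ f, Φ.map p (Φ.map i f) = - Φ.map dF f) :=
  left_exact_functor_of_butterfly_general Φ E1 E0 F1 F0 dE dF Y j q i p hinj hsurj hex hpj hqj hpi
    hF1
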